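/- arXiv:2401.00437 — 2 statements merged into one kernel-verified Lean document; each statement's English description precedes it below -/
import Mathlib

section
/- Holding the average individual squared error fixed, the ensemble error decreases strictly as variance increases: if two score families S and T with common mean errors satisfy (1/N)∑(s_i - y)² = (1/N)∑(t_i - y)² and Var(S) < Var(T), then (s̄ - y)² > (t̄ - y)². -/
/-!
Bias–variance decomposition: the mean squared error of a family about `y` splits as its variance
plus the squared error of its mean, `(1/N)∑(sᵢ - y)² = Var(S) + (s̄ - y)²`. With the left-hand
side equal for `S` and `T`, a larger variance forces a smaller squared error of the mean.
-/

open Finset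

section BiasVariance

variable {ι : Type*} [Fintype ι]

theorem sum_sub_eq_zero_of_sum_eq_card_mul (s : ι → ℝ) (m : ℝ)
    (hm : ∑ i, s i = Fintype.card ι * m) : ∑ i, (s i - m) = 0 := by
  rw [sum_sub_distrib, hm, sum_const, card_univ, nsmul_eq_mul, sub_self]

theorem sum_sq_sub_eq_sum_sq_sub_add_card_mul_sq (s : ι → ℝ) (m y : ℝ)
    (hm : ∑ i, s i = Fintype.card ι * m) :
    ∑ i, (s i - y) ^ 2 = ∑ i, (s i - m) ^ 2 + Fintype.card ι * (m - y) ^ 2 := by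
  have hsplit : ∀ i, (s i - y) ^ 2 = (s i - m) ^ 2 + 2 * (m - y) * (s i - m) + (m - y) ^ 2 :=
    fun i => by ring
  simp only [hsplit, sum_add_distrib, ← mul_sum, sum_sub_eq_zero_of_sum_eq_card_mul s m hm,
    sum_const, card_univ, nsmul_eq_mul]
  ring

theorem mean_sq_sub_eq_mean_sq_sub_mean_add_sq [Nonempty ι] (s : ι → ℝ) (m y : ℝ)
    (hm : m = 1 / Fintype.card ι * ∑ i, s i) :
    1 / Fintype.card ι * ∑ i, (s i - y) ^ 2 =
      1 / Fintype.card ι * ∑ i, (s i - m) ^ 2 + (m - y) ^ 2 := by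
  have hcard : (Fintype.card ι : ℝ) ≠ 0 := Nat.cast_ne_zero.mpr Fintype.card_ne_zero
  have hsum : ∑ i, s i = Fintype.card ι * m := by
    rw [hm]
    field_simp
  rw [sum_sq_sub_eq_sum_sq_sub_add_card_mul_sq s m y hsum]
  field_simp

end BiasVariance

theorem more_variance_less_ensemble_error (N : ℕ) (hN : 0 < N)
    (s t : Fin N → ℝ) (y : ℝ) (sbar tbar : ℝ)
    (hsbar : sbar = (1 / N) * ∑ i, s i) (htbar : tbar = (1 / N) * ∑ i, t i)
    (herr : (1 / N) * ∑ i, (s i - y) ^ 2 = (1 / N) * ∑ i, (t i - y) ^ 2)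
    (hvar : (1 / N) * ∑ i, (s i - sbar) ^ 2 < (1 / N) * ∑ i, (t i - tbar) ^ 2) :
    (sbar - y) ^ 2 > (tbar - y) ^ 2 := by
  have : Nonempty (Fin N) := Fin.pos_iff_nonempty.mp hN
  have hs := mean_sq_sub_eq_mean_sq_sub_mean_add_sq s sbar y (by simpa using hsbar)
  have ht := mean_sq_sub_eq_mean_sq_sub_mean_add_sq t tbar y (by simpa using htbar)
  simp only [Fintype.card_fin] at hs ht
  linarith
end

section
/- For any permutation σ of {1,...,n}, ∑_{i=1}^n (σ(i) - i)² ≤ n(n²-1)/3, with equality for the reversal permutation σ(i) = n+1-i. -/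
/-!
Since `σ` permutes the values `i`, `∑ (σ i - i)² = 2 ∑ i² - 2 ∑ i σ(i)`, so maximising the
displacement means minimising `∑ i σ(i)`. By the rearrangement inequality this is smallest when
`σ` is antitone, i.e. for the reversal, whose displacements `n - 1 - 2i` sum in square to
`n(n² - 1)/3`.
-/

open Finset

theorem sum_sub_sq_comp_perm {ι α : Type*} [Fintype ι] [CommRing α] (f : ι → α)
    (σ : Equiv.Perm ι) :
    ∑ i, (f (σ i) - f i) ^ 2 = 2 * ∑ i, f i ^ 2 - 2 * ∑ i, f i * f (σ i) := by
  have hsq : ∑ i, f (σ i) ^ 2 = ∑ i, f i ^ 2 := Equiv.sum_comp σ (fun i => f i ^ 2)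
  calc ∑ i, (f (σ i) - f i) ^ 2
      = ∑ i, f (σ i) ^ 2 + ∑ i, f i ^ 2 - 2 * ∑ i, f i * f (σ i) := by
        rw [← sum_add_distrib, mul_sum, ← sum_sub_distrib]
        exact sum_congr rfl fun i _ => by ring
    _ = 2 * ∑ i, f i ^ 2 - 2 * ∑ i, f i * f (σ i) := by rw [hsq]; ring

theorem sum_sub_sq_comp_perm_le_of_antivary {ι α : Type*} [Fintype ι] [CommRing α]
    [LinearOrder α] [IsStrictOrderedRing α] (f : ι → α) (σ τ : Equiv.Perm ι)
    (hτ : Antivary f (f ∘ τ)) :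
    ∑ i, (f (σ i) - f i) ^ 2 ≤ ∑ i, (f (τ i) - f i) ^ 2 := by
  have hmul : ∑ i, f i * f (τ i) ≤ ∑ i, f i * f (σ i) := by
    simpa using hτ.sum_mul_le_sum_mul_comp_perm (σ := σ.trans τ.symm)
  rw [sum_sub_sq_comp_perm, sum_sub_sq_comp_perm]
  linarith

theorem sum_range_sub_two_mul_sq (a : ℝ) (n : ℕ) :
    ∑ i ∈ range n, (a - 2 * i) ^ 2 =
      n * a ^ 2 - 2 * a * n * (n - 1) + 2 * n * (n - 1) * (2 * n - 1) / 3 := by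
  induction n with
  | zero => simp
  | succ m ih =>
    rw [sum_range_succ, ih]
    push_cast
    ring

theorem sum_fin_rev_sub_sq (n : ℕ) :
    ∑ i : Fin n, (((Fin.rev i : ℕ) : ℝ) - ((i : ℕ) : ℝ)) ^ 2 = n * ((n : ℝ) ^ 2 - 1) / 3 := by
  have hrev : ∀ i : Fin n, ((Fin.rev i : ℕ) : ℝ) - (i : ℕ) = ((n : ℝ) - 1) - 2 * (i : ℕ) := by
    intro i
    rw [Fin.val_rev, Nat.cast_sub i.isLt]
    push_cast
    ring
  simp_rw [hrev]
  rw [Fin.sum_univ_eq_sum_range (fun i => ((n : ℝ) - 1 - 2 * i) ^ 2), sum_range_sub_two_mul_sq]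
  ring

theorem perm_displacement_bound_general (n : ℕ) :
    (∀ σ : Equiv.Perm (Fin n),
      ∑ i, (((σ i : ℕ) : ℝ) - ((i : ℕ) : ℝ)) ^ 2 ≤ n * ((n : ℝ) ^ 2 - 1) / 3) ∧
    ∑ i : Fin n, (((Fin.rev i : ℕ) : ℝ) - ((i : ℕ) : ℝ)) ^ 2 =
      n * ((n : ℝ) ^ 2 - 1) / 3 := by
  refine ⟨fun σ => ?_, sum_fin_rev_sub_sq n⟩
  have hval : Monotone fun i : Fin n => ((i : ℕ) : ℝ) :=
    Nat.mono_cast.comp Fin.val_strictMono.monotone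
  have hanti : Antivary (fun i : Fin n => ((i : ℕ) : ℝ)) (fun i => ((Fin.rev i : ℕ) : ℝ)) :=
    hval.antivary (hval.comp_antitone Fin.rev_anti)
  rw [← sum_fin_rev_sub_sq n]
  exact sum_sub_sq_comp_perm_le_of_antivary _ σ Fin.revPerm hanti

theorem perm_displacement_bound (n : ℕ) (hn : 0 < n) :
    (∀ σ : Equiv.Perm (Fin n),
      ∑ i, (((σ i : ℕ) : ℝ) - ((i : ℕ) : ℝ)) ^ 2 ≤ n * ((n : ℝ) ^ 2 - 1) / 3) ∧
    ∑ i : Fin n, (((Fin.rev i : ℕ) : ℝ) - ((i : ℕ) : ℝ)) ^ 2 =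
      n * ((n : ℝ) ^ 2 - 1) / 3 :=
  perm_displacement_bound_general n
end
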